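/- Let (E,H,(·|·)) and (E,H,(·|·)') be two extended affine Lie algebra structures on the same Lie algebra E over a field k of characteristic 0 with the same subalgebra H, and denote by Ψ, Ψ⁰, Ψ^an and Ψ', Ψ'⁰, Ψ'^an their respective sets of roots, isotropic roots and anisotropic roots. Then Ψ = Ψ', Ψ⁰ = Ψ'⁰, and Ψ^an = Ψ'^an. -/

import Mathlib

section EALA

variable {k E : Type*} [Field k] [CharZero k] [LieRing E] [LieAlgebra k E]

/-- The weight space of the toral subalgebra `H` for the weight `α ∈ H*`:
`E_α = {e ∈ E : [h,e] = α(h)e for all h ∈ H}`. -/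
def wtSpace (H : LieSubalgebra k E) (α : Module.Dual k H) : Submodule k E where
  carrier := {e | ∀ h : H, ⁅(h : E), e⁆ = α h • e}
  add_mem' := by
    intro a b ha hb h
    simp only [lie_add, ha h, hb h, smul_add]
  zero_mem' := by
    intro h
    simp
  smul_mem' := by
    intro c a ha h
    rw [lie_smul, ha h, smul_comm]

/-- The set of roots `Ψ` of `(E,H)`: those `α ∈ H*` with `E_α ≠ 0` (note `0 ∈ Ψ`). -/
def rootSet (H : LieSubalgebra k E) : Set (Module.Dual k H) :=
  {α | wtSpace H α ≠ ⊥}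

variable (B : E →ₗ[k] E →ₗ[k] k)

/-- The representatives `t_α ∈ H` of `α ∈ H*` under the form: `(t_α | h) = α(h)` for `h ∈ H`. -/
def reps (H : LieSubalgebra k E) (α : Module.Dual k H) : Set H :=
  {t | ∀ h : H, B (t : E) (h : E) = α h}

/-- The anisotropic roots: `Ψ^an = {α ∈ Ψ : (α|α) ≠ 0}`. -/
def anisoRootSet (H : LieSubalgebra k E) : Set (Module.Dual k H) :=
  {α | α ∈ rootSet H ∧ ∃ t ∈ reps B H α, B (t : E) (t : E) ≠ 0}

/-- The isotropic (null) roots: `Ψ⁰ = {α ∈ Ψ : (α|α) = 0}`. -/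
def isoRootSet (H : LieSubalgebra k E) : Set (Module.Dual k H) :=
  {α | α ∈ rootSet H ∧ ∃ t ∈ reps B H α, B (t : E) (t : E) = 0}

/-- The core `E_c` of `(E, H, (·|·))`: the subalgebra of `E` generated by
`⋃_{α ∈ Ψ^an} E_α`. -/
def core (H : LieSubalgebra k E) : LieSubalgebra k E :=
  LieSubalgebra.lieSpan k E (⋃ α ∈ anisoRootSet B H, (wtSpace H α : Set E))

/-- An extended affine Lie algebra structure `(E, H, (·|·))` (paper §2.3):
axioms (EA1)–(EA5), together with the requirements that the bilinear form is
nondegenerate, symmetric and invariant. -/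
structure IsEALA (H : LieSubalgebra k E) : Prop where
  /-- the form is symmetric -/
  symm : ∀ x y : E, B x y = B y x
  /-- the form is invariant -/
  invariant : ∀ x y z : E, B ⁅x, y⁆ z = B x ⁅y, z⁆
  /-- the form is nondegenerate -/
  nondeg : ∀ x : E, (∀ y : E, B x y = 0) → x = 0
  /-- (EA1): `H` is nontrivial … -/
  H_ne_bot : H ≠ ⊥
  /-- … finite-dimensional … -/
  H_fd : FiniteDimensional k H
  /-- … self-centralizing (in particular abelian): `E_0 = H` … -/
  self_centralizing : wtSpace H 0 = H.toSubmodule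
  /-- … and toral: `E = ⊕_{α ∈ H*} E_α` -/
  toral : (⨆ α : Module.Dual k H, wtSpace H α) = ⊤
  /-- the restriction of the form to `H × H` is nondegenerate -/
  H_nondeg : ∀ t : H, (∀ h : H, B (t : E) (h : E) = 0) → t = 0
  /-- (EA2): `ad x` is locally nilpotent for `x ∈ E_α`, `α ∈ Ψ^an` -/
  ea2 : ∀ α ∈ anisoRootSet B H, ∀ x ∈ wtSpace H α, ∀ e : E,
    ∃ N : ℕ, (fun y => ⁅x, y⁆)^[N] e = 0
  /-- (EA3): `Ψ^an` is connected -/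
  ea3 : ∀ Ψ₁ Ψ₂ : Set (Module.Dual k H), anisoRootSet B H = Ψ₁ ∪ Ψ₂ →
    Ψ₁.Nonempty → Ψ₂.Nonempty →
    ∃ α ∈ Ψ₁, ∃ β ∈ Ψ₂, ∃ t ∈ reps B H α, ∃ s ∈ reps B H β, B (t : E) (s : E) ≠ 0
  /-- (EA4): the centralizer of the core is contained in the core -/
  ea4 : ∀ e : E, (∀ x ∈ core B H, ⁅e, x⁆ = 0) → e ∈ core B H
  /-- (EA5): the subgroup of `(H*,+)` generated by `Ψ⁰` is free abelian of finite rank -/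
  ea5 : ∃ n : ℕ, Nonempty ((AddSubgroup.closure (isoRootSet B H)) ≃+ (Fin n → ℤ))

end EALA

/-!
For an anisotropic root `α` and `x ∈ E_α`, `y ∈ E_{-α}` with `(x|y) ≠ 0`, invariance of the form
gives `[x,y] = (x|y) t_α ∈ H`, so `α([x,y]) = (x|y)(α|α) ≠ 0`. Conversely, if `α([x,y]) ≠ 0` for
some such `x, y`, then `(x|y) ≠ 0` and `t_α = (x|y)⁻¹ [x,y]` has `(α|α) = α(t_α) ≠ 0`. Hence the
anisotropic roots are described without reference to the form, and the isotropic roots are the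
remaining roots because every `α ∈ H*` has exactly one representative `t_α`.
-/

section RootsIndependentOfForm

variable {k E : Type*} [Field k] [LieRing E] [LieAlgebra k E]
variable {B : E →ₗ[k] E →ₗ[k] k} {H : LieSubalgebra k E}

lemma lie_mem_wtSpace_add {α β : Module.Dual k H} {x y : E}
    (hx : x ∈ wtSpace H α) (hy : y ∈ wtSpace H β) : ⁅x, y⁆ ∈ wtSpace H (α + β) := by
  intro h
  rw [leibniz_lie, hx h, hy h, smul_lie, lie_smul, LinearMap.add_apply, add_smul]

lemma apply_eq_zero_of_mem_wtSpace (hB : ∀ x y z : E, B ⁅x, y⁆ z = B x ⁅y, z⁆)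
    {α β : Module.Dual k H} (hαβ : α + β ≠ 0) {x z : E}
    (hx : x ∈ wtSpace H α) (hz : z ∈ wtSpace H β) : B x z = 0 := by
  obtain ⟨h, hh⟩ : ∃ h : H, α h + β h ≠ 0 := by
    by_contra! hc
    exact hαβ (LinearMap.ext hc)
  have hinv := hB x h z
  rw [← lie_skew, hz h, hx h] at hinv
  simp only [map_neg, map_smul, LinearMap.neg_apply, LinearMap.smul_apply, smul_eq_mul] at hinv
  have : (α h + β h) * B x z = 0 := by linear_combination -hinv
  exact (mul_eq_zero.mp this).resolve_left hh

lemma apply_lie_eq_mul (hB : ∀ x y z : E, B ⁅x, y⁆ z = B x ⁅y, z⁆)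
    {α : Module.Dual k H} {x y : E} (hy : y ∈ wtSpace H (-α)) (h : H) :
    B ⁅x, y⁆ h = α h * B x y := by
  rw [hB, ← lie_skew, hy h, LinearMap.neg_apply, neg_smul, neg_neg, map_smul, smul_eq_mul]

lemma eq_of_mem_reps (hH : ∀ t : H, (∀ h : H, B t h = 0) → t = 0)
    {α : Module.Dual k H} {t s : H} (ht : t ∈ reps B H α) (hs : s ∈ reps B H α) : t = s :=
  sub_eq_zero.mp <| hH _ fun h => by
    rw [AddSubgroupClass.coe_sub, map_sub, LinearMap.sub_apply, ht h, hs h, sub_self]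

lemma exists_mem_reps (hB : IsEALA B H) (α : Module.Dual k H) : ∃ t, t ∈ reps B H α := by
  have := hB.H_fd
  let BH : LinearMap.BilinForm k H := B.compl₁₂ H.toSubmodule.subtype H.toSubmodule.subtype
  have hBH : BH.Nondegenerate :=
    ⟨hB.H_nondeg, fun t ht => hB.H_nondeg t fun h => by rw [hB.symm]; exact ht h⟩
  exact ⟨(BH.toDual hBH).symm α, LinearMap.BilinForm.apply_toDual_symm_apply (hB := hBH) α⟩

lemma exists_mem_wtSpace_neg_apply_ne_zero (hB : IsEALA B H) {α : Module.Dual k H} {x : E}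
    (hx : x ∈ wtSpace H α) (hx₀ : x ≠ 0) : ∃ y ∈ wtSpace H (-α), B x y ≠ 0 := by
  by_contra! hc
  refine hx₀ (hB.nondeg x fun z => ?_)
  suffices (⨆ β : Module.Dual k H, wtSpace H β) ≤ LinearMap.ker (B x) by
    exact this (hB.toral ▸ Submodule.mem_top)
  refine iSup_le fun β w hw => LinearMap.mem_ker.mpr ?_
  by_cases hβ : β = -α
  · exact hc w (hβ ▸ hw)
  · exact apply_eq_zero_of_mem_wtSpace hB.invariant
      (fun h => hβ (eq_neg_of_add_eq_zero_right h)) hx hw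

lemma mem_anisoRootSet_of_lie (hB : ∀ x y z : E, B ⁅x, y⁆ z = B x ⁅y, z⁆)
    (hH : ∀ t : H, (∀ h : H, B t h = 0) → t = 0) {α : Module.Dual k H} {x y : E}
    (hx : x ∈ wtSpace H α) (hy : y ∈ wtSpace H (-α)) {h₀ : H} (hh₀ : (h₀ : E) = ⁅x, y⁆)
    (hαh₀ : α h₀ ≠ 0) : α ∈ anisoRootSet B H := by
  have hxy : B x y ≠ 0 := by
    refine fun hxy => hαh₀ ?_
    rw [hH h₀ fun h => by rw [hh₀, apply_lie_eq_mul hB hy, hxy, mul_zero], map_zero]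
  have hrep : (B x y)⁻¹ • h₀ ∈ reps B H α := fun h => by
    rw [SetLike.val_smul, map_smul, LinearMap.smul_apply, hh₀, apply_lie_eq_mul hB hy,
      smul_eq_mul, mul_left_comm, inv_mul_cancel₀ hxy, mul_one]
  have hx₀ : x ≠ 0 := by
    rintro rfl
    rw [zero_lie, ZeroMemClass.coe_eq_zero] at hh₀
    exact hαh₀ (hh₀ ▸ map_zero α)
  refine ⟨(Submodule.ne_bot_iff _).mpr ⟨x, hx, hx₀⟩, _, hrep, ?_⟩
  rw [hrep, map_smul, smul_eq_mul]
  exact mul_ne_zero (inv_ne_zero hxy) hαh₀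

lemma exists_lie_of_mem_anisoRootSet (hB : IsEALA B H) {α : Module.Dual k H}
    (hα : α ∈ anisoRootSet B H) : ∃ x ∈ wtSpace H α, ∃ y ∈ wtSpace H (-α), ∃ h₀ : H,
      (h₀ : E) = ⁅x, y⁆ ∧ α h₀ ≠ 0 := by
  obtain ⟨hroot, t, ht, htt⟩ := hα
  obtain ⟨x, hx, hx₀⟩ := (Submodule.ne_bot_iff _).mp hroot
  obtain ⟨y, hy, hxy⟩ := exists_mem_wtSpace_neg_apply_ne_zero hB hx hx₀
  have hxyH : ⁅x, y⁆ ∈ H.toSubmodule := by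
    rw [← hB.self_centralizing, ← add_neg_cancel α]
    exact lie_mem_wtSpace_add hx hy
  refine ⟨x, hx, y, hy, ⟨_, hxyH⟩, rfl, ?_⟩
  have hh₀ : (⟨_, hxyH⟩ : H) = B x y • t := sub_eq_zero.mp <| hB.H_nondeg _ fun h => by
    rw [AddSubgroupClass.coe_sub, map_sub, LinearMap.sub_apply, apply_lie_eq_mul hB.invariant hy,
      SetLike.val_smul, map_smul, LinearMap.smul_apply, ht h, smul_eq_mul, mul_comm, sub_self]
  rw [hh₀, map_smul, smul_eq_mul, ← ht t]
  exact mul_ne_zero hxy htt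

lemma anisoRootSet_eq_setOf_exists_lie (hB : IsEALA B H) :
    anisoRootSet B H = {α | ∃ x ∈ wtSpace H α, ∃ y ∈ wtSpace H (-α), ∃ h₀ : H,
      (h₀ : E) = ⁅x, y⁆ ∧ α h₀ ≠ 0} := by
  ext α
  refine ⟨exists_lie_of_mem_anisoRootSet hB, ?_⟩
  rintro ⟨x, hx, y, hy, h₀, hh₀, hαh₀⟩
  exact mem_anisoRootSet_of_lie hB.invariant hB.H_nondeg hx hy hh₀ hαh₀

lemma isoRootSet_eq_diff (hB : IsEALA B H) : isoRootSet B H = rootSet H \ anisoRootSet B H := by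
  ext α
  obtain ⟨t, ht⟩ := exists_mem_reps hB α
  have hreps : ∀ s ∈ reps B H α, s = t := fun s hs => eq_of_mem_reps hB.H_nondeg hs ht
  constructor
  · rintro ⟨hroot, s, hs, hss⟩
    refine ⟨hroot, fun ⟨_, s', hs', hs's'⟩ => hs's' ?_⟩
    rwa [hreps s' hs', ← hreps s hs]
  · rintro ⟨hroot, hnot⟩
    exact ⟨hroot, t, ht, not_not.mp fun htt => hnot ⟨hroot, t, ht, htt⟩⟩

end RootsIndependentOfForm

theorem eala_roots_independent_of_form_general
    {k E : Type*} [Field k] [LieRing E] [LieAlgebra k E]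
    (B : E →ₗ[k] E →ₗ[k] k) (H : LieSubalgebra k E) (h : IsEALA B H)
    (B' : E →ₗ[k] E →ₗ[k] k) (h' : IsEALA B' H) :
    rootSet (k := k) H = rootSet (k := k) H ∧
    isoRootSet B H = isoRootSet B' H ∧
    anisoRootSet B H = anisoRootSet B' H := by
  have haniso : anisoRootSet B H = anisoRootSet B' H := by
    rw [anisoRootSet_eq_setOf_exists_lie h, anisoRootSet_eq_setOf_exists_lie h']
  refine ⟨rfl, ?_, haniso⟩
  rw [isoRootSet_eq_diff h, isoRootSet_eq_diff h', haniso]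

/-- Corollary 3.3(a) of the paper: two EALA structures `(E,H,(·|·))` and
`(E,H,(·|·)')` with the same subalgebra `H` have the same roots, the same isotropic
roots and the same anisotropic roots: `Ψ = Ψ'`, `Ψ⁰ = Ψ'⁰`, `Ψ^an = Ψ'^an`. -/
theorem eala_roots_independent_of_form
    {k E : Type*} [Field k] [CharZero k] [LieRing E] [LieAlgebra k E]
    (B : E →ₗ[k] E →ₗ[k] k) (H : LieSubalgebra k E) (h : IsEALA B H)
    (B' : E →ₗ[k] E →ₗ[k] k) (h' : IsEALA B' H) :
    rootSet (k := k) H = rootSet (k := k) H ∧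
    isoRootSet B H = isoRootSet B' H ∧
    anisoRootSet B H = anisoRootSet B' H :=
  eala_roots_independent_of_form_general B H h B' h'
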